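/- arXiv:1512.05850 — 2 statements merged into one kernel-verified Lean document; each statement's English description precedes it below -/
import Mathlib

section
/- Dirichlet's theorem in function fields: let F = F_q((T⁻¹)) and Λ = F_q[T]. For any nonnegative integer t and any y = (y_1, ..., y_n) ∈ F^n, there exist a nonzero q = (q_1, ..., q_n) ∈ Λ^n and p ∈ Λ such that |y_1 q_1 + ... + y_n q_n − p| < e^{−nt} and max_{1≤j≤n} |q_j| ≤ e^t. -/
open scoped Classical in
/-- The absolute value `|a| = e^(deg a)` on `F = F_q((T⁻¹))`.  We realize `F` as the
field of Laurent series `F_q((X))` via `X = T⁻¹`, so that `deg a = −(order a)`. -/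
noncomputable def lAbs {Fq : Type*} [Field Fq] (a : LaurentSeries Fq) : ℝ :=
  if a = 0 then 0 else Real.exp (-(a.order : ℝ))

/-- The element `T ∈ F = F_q((T⁻¹))` (i.e. `X⁻¹` in the Laurent series realization). -/
noncomputable def Tvar (Fq : Type*) [Field Fq] : LaurentSeries Fq :=
  HahnSeries.single (-1 : ℤ) 1

/-- The embedding of `Λ = F_q[T]` into `F = F_q((T⁻¹))`, sending a polynomial `p` to `p(T)`. -/
noncomputable def polyToF {Fq : Type*} [Field Fq] (p : Polynomial Fq) : LaurentSeries Fq :=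
  Polynomial.aeval (Tvar Fq) p

/-!
The map sending `q ∈ Λⁿ` with all `deg q_j ≤ t` to the coefficients of `T⁻¹, …, T^(-nt)` in
`∑ y_j q_j` is `F_q`-linear from a space of dimension `n(t+1)` to one of dimension `nt`, so it
has a nonzero kernel element `q`. Subtracting from `∑ y_j q_j` its polynomial part `p` leaves a
Laurent series whose first nonzero coefficient is that of `T^(-k)` for some `k > nt`.
-/

open Polynomial

section DirichletFunctionField

variable {Fq : Type*} [Field Fq]

lemma algebraMap_laurentSeries (a : Fq) :
    algebraMap Fq (LaurentSeries Fq) a = HahnSeries.C a := by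
  rw [HahnSeries.algebraMap_apply', PowerSeries.algebraMap_apply, Algebra.algebraMap_self_apply,
    HahnSeries.ofPowerSeries_C]

lemma coeff_algebraMap_mul (a : Fq) (z : LaurentSeries Fq) (k : ℤ) :
    (algebraMap Fq (LaurentSeries Fq) a * z).coeff k = a * z.coeff k := by
  rw [algebraMap_laurentSeries, HahnSeries.C_mul_eq_smul, HahnSeries.coeff_smul, smul_eq_mul]

lemma Tvar_pow (m : ℕ) : Tvar Fq ^ m = HahnSeries.single (-(m : ℤ)) 1 := by
  simp [Tvar]

lemma polyToF_smul (a : Fq) (p : Fq[X]) :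
    polyToF (a • p) = algebraMap Fq (LaurentSeries Fq) a * polyToF p := by
  rw [smul_eq_C_mul, polyToF, polyToF, map_mul, aeval_C]

lemma polyToF_coeff (p : Fq[X]) (k : ℤ) :
    (polyToF p).coeff k = if k ≤ 0 then p.coeff (-k).toNat else 0 := by
  induction p using Polynomial.induction_on' with
  | add p q hp hq =>
    simp only [polyToF, map_add, HahnSeries.coeff_add, Polynomial.coeff_add] at *
    rw [hp, hq]
    split_ifs <;> simp
  | monomial m a =>
    rw [polyToF, aeval_monomial, Tvar_pow, algebraMap_laurentSeries, HahnSeries.C_apply,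
      HahnSeries.single_mul_single, zero_add, mul_one, HahnSeries.coeff_single, coeff_monomial]
    split_ifs <;> first | rfl | omega

lemma exists_polyToF_coeff_eq (z : LaurentSeries Fq) :
    ∃ p : Fq[X], ∀ k ≤ 0, (polyToF p).coeff k = z.coeff k := by
  classical
  refine ⟨∑ i ∈ Finset.range ((-z.order).toNat + 1), monomial i (z.coeff (-i)), fun k hk => ?_⟩
  rw [polyToF_coeff, if_pos hk, finsetSum_coeff]
  simp only [coeff_monomial, Finset.sum_ite_eq', Finset.mem_range]
  split_ifs
  · congr
    omega
  · exact (HahnSeries.coeff_eq_zero_of_lt_order (by omega)).symm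

lemma lAbs_lt_exp_of_coeff_eq_zero {a : LaurentSeries Fq} {N : ℤ}
    (h : ∀ k ≤ N, a.coeff k = 0) : lAbs a < Real.exp (-N) := by
  unfold lAbs
  split_ifs with ha
  · exact Real.exp_pos _
  · have hN : N < a.order :=
      not_le.mp fun hle => ha (HahnSeries.coeff_order_eq_zero.mp (h _ hle))
    exact Real.exp_lt_exp.mpr (neg_lt_neg (by exact_mod_cast hN))

lemma lAbs_le_exp_of_coeff_eq_zero {a : LaurentSeries Fq} {N : ℤ}
    (h : ∀ k < -N, a.coeff k = 0) : lAbs a ≤ Real.exp N := by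
  unfold lAbs
  split_ifs with ha
  · exact (Real.exp_pos _).le
  · have hN : -N ≤ a.order :=
      not_lt.mp fun hlt => ha (HahnSeries.coeff_order_eq_zero.mp (h _ hlt))
    exact Real.exp_le_exp.mpr (neg_le.mp (by exact_mod_cast hN))

lemma lAbs_polyToF_le {p : Fq[X]} {t : ℕ} (hp : p.degree ≤ t) :
    lAbs (polyToF p) ≤ Real.exp t := by
  have := lAbs_le_exp_of_coeff_eq_zero (a := polyToF p) (N := t) fun k hk => by
    rw [polyToF_coeff, if_pos (by omega)]
    exact coeff_eq_zero_of_degree_lt (hp.trans_lt (by exact_mod_cast (by omega : t < (-k).toNat)))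
  exact_mod_cast this

lemma exists_ne_zero_coeff_sum_mul_polyToF_eq_zero {n : ℕ} (hn : 0 < n) (t : ℕ)
    (y : Fin n → LaurentSeries Fq) :
    ∃ q : Fin n → Fq[X], q ≠ 0 ∧ (∀ j, (q j).degree ≤ t) ∧
      ∀ k : ℤ, 0 < k → k ≤ n * t → (∑ j, y j * polyToF (q j)).coeff k = 0 := by
  let f : (Fin n → degreeLT Fq (t + 1)) →ₗ[Fq] Fin (n * t) → Fq :=
    { toFun := fun q i => (∑ j, y j * polyToF (q j : Fq[X])).coeff (i + 1)
      map_add' := fun q r => by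
        ext i
        simp [polyToF, mul_add, Finset.sum_add_distrib]
      map_smul' := fun c q => by
        ext i
        simp [polyToF_smul, mul_left_comm _ (algebraMap _ _ c), ← Finset.mul_sum,
          coeff_algebraMap_mul] }
  have hdim : Module.finrank Fq (Fin (n * t) → Fq) <
      Module.finrank Fq (Fin n → degreeLT Fq (t + 1)) := by
    rw [Module.finrank_fin_fun, Module.finrank_pi_fintype]
    simp only [(degreeLTEquiv Fq (t + 1)).finrank_eq, Module.finrank_fin_fun, Finset.sum_const,
      Finset.card_univ, Fintype.card_fin, smul_eq_mul]
    nlinarith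
  obtain ⟨q, hq, hq0⟩ :=
    Submodule.exists_mem_ne_zero_of_ne_bot (LinearMap.ker_ne_bot_of_finrank_lt hdim)
  refine ⟨fun j => q j, fun h => hq0 (funext fun j => Subtype.ext (congrFun h j)),
    fun j => mem_degreeLE.mp (by rw [← degreeLT_succ_eq_degreeLE]; exact (q j).2),
    fun k hk hkn => ?_⟩
  have := congrFun (LinearMap.mem_ker.mp hq : f q = 0) ⟨(k - 1).toNat, by omega⟩
  simp only [f, LinearMap.coe_mk, AddHom.coe_mk, Pi.zero_apply] at this
  rwa [show (((k - 1).toNat : ℕ) : ℤ) + 1 = k by omega] at this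

end DirichletFunctionField

theorem dirichlet_function_field_general {Fq : Type*} [Field Fq]
    (n : ℕ) (hn : 0 < n) (t : ℕ) (y : Fin n → LaurentSeries Fq) :
    ∃ q : Fin n → Polynomial Fq, q ≠ 0 ∧ ∃ p : Polynomial Fq,
      lAbs (∑ j, y j * polyToF (q j) - polyToF p) < Real.exp (-(n * t : ℝ)) ∧
      ∀ j, lAbs (polyToF (q j)) ≤ Real.exp (t : ℝ) := by
  obtain ⟨q, hq0, hdeg, hq⟩ := exists_ne_zero_coeff_sum_mul_polyToF_eq_zero hn t y
  obtain ⟨p, hp⟩ := exists_polyToF_coeff_eq (∑ j, y j * polyToF (q j))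
  refine ⟨q, hq0, p, ?_, fun j => lAbs_polyToF_le (hdeg j)⟩
  have hsmall := lAbs_lt_exp_of_coeff_eq_zero (N := n * t)
    (a := ∑ j, y j * polyToF (q j) - polyToF p) fun k hk => by
      rw [HahnSeries.coeff_sub]
      rcases le_or_gt k 0 with hk0 | hk0
      · rw [hp k hk0, sub_self]
      · rw [polyToF_coeff, if_neg hk0.not_ge, sub_zero, hq k hk0 hk]
  exact_mod_cast hsmall

/-- Dirichlet's theorem in function fields.  For every nonnegative integer `t`
and every `y ∈ F^n` there are `q ∈ Λ^n \ {0}` and `p ∈ Λ` with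
`|y·q − p| < e^(−n t)` and `max_j |q_j| ≤ e^t`. -/
theorem dirichlet_function_field {Fq : Type*} [Field Fq] [Fintype Fq]
    (n : ℕ) (hn : 0 < n) (t : ℕ) (y : Fin n → LaurentSeries Fq) :
    ∃ q : Fin n → Polynomial Fq, q ≠ 0 ∧ ∃ p : Polynomial Fq,
      lAbs (∑ j, y j * polyToF (q j) - polyToF p) < Real.exp (-(n * t : ℝ)) ∧
      ∀ j, lAbs (polyToF (q j)) ≤ Real.exp (t : ℝ) :=
  dirichlet_function_field_general n hn t y
end

section
/- Suppose f is (C, α)-good on U with respect to ν and g: U → ℝ is continuous with c_1 ≤ |f/g| ≤ c_2 on U for some c_1, c_2 > 0. Then g is (C (c_2/c_1)^α, α)-good on U with respect to ν. -/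
open MeasureTheory

/-- The support of a measure on a metric space: points all of whose balls have
positive measure. -/
def msupp {X : Type*} [MetricSpace X] [MeasurableSpace X] (ν : Measure X) : Set X :=
  {x | ∀ r > (0 : ℝ), 0 < ν (Metric.ball x r)}

/-- `‖f‖_{ν,B} = sup_(x ∈ B ∩ supp ν) |f x|`. -/
noncomputable def supNormOn {X 𝓕 : Type*} [MetricSpace X] [MeasurableSpace X] [Field 𝓕]
    (ν : Measure X) (abv : AbsoluteValue 𝓕 ℝ) (f : X → 𝓕) (B : Set X) : ℝ :=
  sSup ((fun x => abv (f x)) '' (B ∩ msupp ν))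

/-- `f : U → 𝓕` is `(C, α)`-good on `U` with respect to `ν`: for every ball `B ⊆ U`
centered in `supp ν` and every `ε > 0`,
`ν {x ∈ B : |f x| < ε} ≤ C (ε / ‖f‖_{ν,B})^α ν(B)`. -/
def IsCGood {X 𝓕 : Type*} [MetricSpace X] [MeasurableSpace X] [Field 𝓕]
    (ν : Measure X) (U : Set X) (C a : ℝ) (abv : AbsoluteValue 𝓕 ℝ) (f : X → 𝓕) : Prop :=
  ∀ (x : X) (r : ℝ), 0 < r → x ∈ msupp ν → Metric.ball x r ⊆ U →
    ∀ ε > (0 : ℝ), ν {y ∈ Metric.ball x r | abv (f y) < ε} ≤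
      ENNReal.ofReal (C * (ε / supNormOn ν abv f (Metric.ball x r)) ^ a) * ν (Metric.ball x r)

/-! If `c₁ |g| ≤ |f| ≤ c₂ |g|`, then `{|g| < ε} ⊆ {|f| < c₂ ε}` and `c₁ ‖g‖_{ν,B} ≤ ‖f‖_{ν,B}`,
so the bound for `f` at level `c₂ ε` is at most `C (c₂/c₁)^α (ε / ‖g‖_{ν,B})^α ν(B)`.
When `‖f‖_{ν,B} = 0` (possibly as the junk value of an unbounded `sSup`), goodness of `f`
already forces `ν {y ∈ B | |f y| < c₂ ε} = 0`. -/

lemma ENNReal.ofReal_mul_le_ofReal_mul {C x y : ℝ} (hx : 0 ≤ x) (hxy : x ≤ y) :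
    ENNReal.ofReal (C * x) ≤ ENNReal.ofReal (C * y) := by
  rcases le_total 0 C with hC | hC
  · exact ENNReal.ofReal_le_ofReal (mul_le_mul_of_nonneg_left hxy hC)
  · rw [ENNReal.ofReal_of_nonpos (mul_nonpos_of_nonpos_of_nonneg hC hx)]
    exact zero_le

lemma rpow_div_le_rpow_div_mul_rpow_div {a c₁ c₂ ε M N : ℝ} (ha : 0 ≤ a) (hc₁ : 0 < c₁)
    (hc₂ : 0 ≤ c₂) (hε : 0 ≤ ε) (hN : 0 < N) (hNM : c₁ * N ≤ M) :
    (c₂ * ε / M) ^ a ≤ (c₂ / c₁) ^ a * (ε / N) ^ a := by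
  have hdiv : c₂ * ε / M ≤ c₂ / c₁ * (ε / N) :=
    calc c₂ * ε / M ≤ c₂ * ε / (c₁ * N) :=
          div_le_div_of_nonneg_left (by positivity) (by positivity) hNM
      _ = c₂ / c₁ * (ε / N) := by field_simp
  have hM : 0 < M := (mul_pos hc₁ hN).trans_le hNM
  rw [← Real.mul_rpow (by positivity) (by positivity)]
  exact Real.rpow_le_rpow (by positivity) hdiv ha

section supNormOn

variable {X 𝓕 𝓖 : Type*} [MetricSpace X] [MeasurableSpace X] [Field 𝓕] [Field 𝓖]
  {ν : Measure X} {abv : AbsoluteValue 𝓕 ℝ} {abv' : AbsoluteValue 𝓖 ℝ}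
  {f : X → 𝓕} {g : X → 𝓖} {B : Set X}

lemma supNormOn_nonneg : 0 ≤ supNormOn ν abv f B :=
  Real.sSup_nonneg (by rintro _ ⟨y, -, rfl⟩; exact abv.nonneg _)

lemma bddAbove_of_supNormOn_pos (h : 0 < supNormOn ν abv f B) :
    BddAbove ((fun y => abv (f y)) '' (B ∩ msupp ν)) := by
  by_contra hbdd
  exact h.ne' (Real.sSup_of_not_bddAbove hbdd)

lemma le_supNormOn (hbdd : BddAbove ((fun y => abv (f y)) '' (B ∩ msupp ν)))
    {y : X} (hy : y ∈ B ∩ msupp ν) : abv (f y) ≤ supNormOn ν abv f B :=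
  le_csSup hbdd ⟨y, hy, rfl⟩

lemma supNormOn_le {M : ℝ} (hne : (B ∩ msupp ν).Nonempty)
    (h : ∀ y ∈ B ∩ msupp ν, abv (f y) ≤ M) : supNormOn ν abv f B ≤ M :=
  csSup_le (hne.image _) (by rintro _ ⟨y, hy, rfl⟩; exact h y hy)

lemma supNormOn_pos_and_mul_le_of_comparable {c₁ c₂ : ℝ} (hc₁ : 0 < c₁) (hc₂ : 0 ≤ c₂)
    (hne : (B ∩ msupp ν).Nonempty) (hf : 0 < supNormOn ν abv f B)
    (hlow : ∀ y ∈ B ∩ msupp ν, c₁ * abv' (g y) ≤ abv (f y))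
    (hup : ∀ y ∈ B ∩ msupp ν, abv (f y) ≤ c₂ * abv' (g y)) :
    0 < supNormOn ν abv' g B ∧ c₁ * supNormOn ν abv' g B ≤ supNormOn ν abv f B := by
  set Nf := supNormOn ν abv f B
  have hg_le : ∀ y ∈ B ∩ msupp ν, abv' (g y) ≤ Nf / c₁ := fun y hy =>
    (le_div_iff₀' hc₁).2 ((hlow y hy).trans (le_supNormOn (bddAbove_of_supNormOn_pos hf) hy))
  have hg_bdd : BddAbove ((fun y => abv' (g y)) '' (B ∩ msupp ν)) :=
    ⟨Nf / c₁, by rintro _ ⟨y, hy, rfl⟩; exact hg_le y hy⟩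
  have hf_le : Nf ≤ c₂ * supNormOn ν abv' g B :=
    supNormOn_le hne fun y hy =>
      (hup y hy).trans (mul_le_mul_of_nonneg_left (le_supNormOn hg_bdd hy) hc₂)
  refine ⟨supNormOn_nonneg.lt_of_ne fun h => ?_, (le_div_iff₀' hc₁).1 (supNormOn_le hne hg_le)⟩
  rw [← h, mul_zero] at hf_le
  exact hf.not_ge hf_le

end supNormOn

theorem IsCGood.of_comparable {X 𝓕 𝓖 : Type*} [MetricSpace X] [MeasurableSpace X] [Field 𝓕]
    [Field 𝓖] {ν : Measure X} {U : Set X} {C a c₁ c₂ : ℝ} {abv : AbsoluteValue 𝓕 ℝ}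
    {abv' : AbsoluteValue 𝓖 ℝ} {f : X → 𝓕} {g : X → 𝓖} (hf : IsCGood ν U C a abv f)
    (ha : 0 < a) (hc₁ : 0 < c₁) (hc₂ : 0 < c₂)
    (hlow : ∀ y ∈ U, c₁ * abv' (g y) ≤ abv (f y)) (hup : ∀ y ∈ U, abv (f y) ≤ c₂ * abv' (g y)) :
    IsCGood ν U (C * (c₂ / c₁) ^ a) a abv' g := by
  intro x r hr hx hBU ε hε
  set B := Metric.ball x r
  have hsub : {y ∈ B | abv' (g y) < ε} ⊆ {y ∈ B | abv (f y) < c₂ * ε} :=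
    fun y ⟨hyB, hy⟩ => ⟨hyB, (hup y (hBU hyB)).trans_lt (by gcongr)⟩
  refine (measure_mono hsub).trans ((hf x r hr hx hBU (c₂ * ε) (by positivity)).trans ?_)
  rcases (supNormOn_nonneg : 0 ≤ supNormOn ν abv f B).eq_or_lt with hNf | hNf
  · rw [← hNf, div_zero, Real.zero_rpow ha.ne', mul_zero, ENNReal.ofReal_zero, zero_mul]
    exact zero_le
  obtain ⟨hNg, hNgf⟩ := supNormOn_pos_and_mul_le_of_comparable hc₁ hc₂.le
    ⟨x, Metric.mem_ball_self hr, hx⟩ hNf (fun y hy => hlow y (hBU hy.1))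
    (fun y hy => hup y (hBU hy.1))
  rw [mul_assoc C]
  gcongr ?_ * _
  exact ENNReal.ofReal_mul_le_ofReal_mul (by positivity)
    (rpow_div_le_rpow_div_mul_rpow_div ha.le hc₁ hc₂.le hε.le hNg hNgf)

theorem isCGood_of_comparable_general {X 𝓕 : Type*} [MetricSpace X] [MeasurableSpace X]
    [Field 𝓕] (ν : Measure X) (U : Set X)
    (C a : ℝ) (ha : 0 < a) (abv : AbsoluteValue 𝓕 ℝ) (f : X → 𝓕)
    (hf : IsCGood ν U C a abv f) (g : X → ℝ)
    (c₁ c₂ : ℝ) (hc₁ : 0 < c₁) (hc₂ : 0 < c₂)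
    (hcomp : ∀ x ∈ U, c₁ ≤ abv (f x) / |g x| ∧ abv (f x) / |g x| ≤ c₂) :
    IsCGood ν U (C * (c₂ / c₁) ^ a) a (AbsoluteValue.abs : AbsoluteValue ℝ ℝ) g := by
  -- At `|g y| = 0` the quotient takes the junk value `0`, which is `< c₁`.
  have hg_pos : ∀ y ∈ U, 0 < |g y| := fun y hy =>
    (abs_nonneg _).lt_of_ne fun h => by
      have := (hcomp y hy).1
      rw [← h, div_zero] at this
      exact hc₁.not_ge this
  refine hf.of_comparable ha hc₁ hc₂ (fun y hy => ?_) (fun y hy => ?_)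
  · exact (le_div_iff₀ (hg_pos y hy)).1 (hcomp y hy).1
  · exact (div_le_iff₀ (hg_pos y hy)).1 (hcomp y hy).2

/-- if `f` is `(C, α)`-good on `U` with respect to `ν` and `g : U → ℝ`
is continuous with `c₁ ≤ |f/g| ≤ c₂` on `U` for some `c₁, c₂ > 0`, then `g` is
`(C (c₂/c₁)^α, α)`-good on `U` with respect to `ν`. -/
theorem isCGood_of_comparable {X 𝓕 : Type*} [MetricSpace X] [MeasurableSpace X] [BorelSpace X]
    [Field 𝓕] (ν : Measure X) [ν.Regular] (U : Set X) (hU : IsOpen U)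
    (C a : ℝ) (hC : 0 < C) (ha : 0 < a) (abv : AbsoluteValue 𝓕 ℝ) (f : X → 𝓕)
    (hf : IsCGood ν U C a abv f) (g : X → ℝ) (hg : ContinuousOn g U)
    (c₁ c₂ : ℝ) (hc₁ : 0 < c₁) (hc₂ : 0 < c₂)
    (hcomp : ∀ x ∈ U, c₁ ≤ abv (f x) / |g x| ∧ abv (f x) / |g x| ≤ c₂) :
    IsCGood ν U (C * (c₂ / c₁) ^ a) a (AbsoluteValue.abs : AbsoluteValue ℝ ℝ) g :=
  isCGood_of_comparable_general ν U C a ha abv f hf g c₁ c₂ hc₁ hc₂ hcomp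
end
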